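/- In every execution of the Hemlock transition-system model, if a thread T_i spinning in the entry code for a lock L on its predecessor's Grant field observes Grant pred = some L and subsequently writes Grant pred := none and enters the critical section protected by L, then at the moment T_i enters the critical section the predecessor thread is outside the critical section protected by L (it has already performed the exit doorstep for L). -/

import Mathlib

namespace Hemlock

/-- Program counter locations of a thread in the Hemlock algorithm. -/
inductive PC where
  | remainder  -- in the remainder section
  | entrySpin  -- in the entry code, spinning on the predecessor's Grant field
  | crit       -- in the critical section
  | exitCAS    -- in the exit code, about to perform the CAS on Tail
  | exitDoor   -- in the exit code, about to perform the exit doorstep (write Grant self := some L)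
  | exitSpin   -- in the exit code, spinning on its own Grant field
deriving DecidableEq

/-- A global state of the Hemlock transition system. -/
structure St (Thread Lock : Type) where
  Tail : Lock → Option Thread        -- the Tail field of each lock
  Grant : Thread → Option Lock       -- the Grant field of each thread
  pc : Thread → PC                   -- program counter of each thread
  lk : Thread → Option Lock          -- the lock currently being acquired/released by each thread
  pred : Thread → Option Thread      -- value returned by each thread's last SWAP

variable {Thread Lock : Type} [DecidableEq Thread] [DecidableEq Lock]

/-- The initial state: all Tail and Grant fields are none, all threads in the remainder. -/
def initSt : St Thread Lock :=
  ⟨fun _ => none, fun _ => none, fun _ => .remainder, fun _ => none, fun _ => none⟩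

/-- One atomic transition of thread `t`. -/
inductive Step (t : Thread) : St Thread Lock → St Thread Lock → Prop where
  /-- a step inside the remainder section -/
  | remainderStay (s : St Thread Lock) (h : s.pc t = .remainder) :
      Step t s s
  /-- the entry doorstep for lock `L`: atomic SWAP on `Tail L`, storing the old value in `pred`;
      if the SWAP returned `none` the thread enters the critical section, else it spins -/
  | doorstep (s : St Thread Lock) (L : Lock) (h : s.pc t = .remainder) :
      Step t s ⟨Function.update s.Tail L (some t), s.Grant,
        Function.update s.pc t (if s.Tail L = none then .crit else .entrySpin),
        Function.update s.lk t (some L),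
        Function.update s.pred t (s.Tail L)⟩
  /-- entry-code busy-wait loop: read `Grant p`; it is not yet `some L`, keep spinning -/
  | spinWait (s : St Thread Lock) (p : Thread) (L : Lock)
      (h : s.pc t = .entrySpin) (hp : s.pred t = some p) (hl : s.lk t = some L)
      (hg : s.Grant p ≠ some L) :
      Step t s s
  /-- entry-code busy-wait loop: read `Grant p = some L`; write `Grant p := none`
      and enter the critical section -/
  | spinAcquire (s : St Thread Lock) (p : Thread) (L : Lock)
      (h : s.pc t = .entrySpin) (hp : s.pred t = some p) (hl : s.lk t = some L)
      (hg : s.Grant p = some L) :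
      Step t s ⟨s.Tail, Function.update s.Grant p none,
        Function.update s.pc t .crit, s.lk, s.pred⟩
  /-- a step inside the critical section -/
  | critStay (s : St Thread Lock) (h : s.pc t = .crit) :
      Step t s s
  /-- leave the critical section and begin the exit code -/
  | exitStart (s : St Thread Lock) (h : s.pc t = .crit) :
      Step t s ⟨s.Tail, s.Grant, Function.update s.pc t .exitCAS, s.lk, s.pred⟩
  /-- successful CAS: `Tail L = some self`, so set `Tail L := none` and
      complete the exit code, returning to the remainder section -/
  | casSucc (s : St Thread Lock) (L : Lock)
      (h : s.pc t = .exitCAS) (hl : s.lk t = some L) (ht : s.Tail L = some t) :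
      Step t s ⟨Function.update s.Tail L none, s.Grant,
        Function.update s.pc t .remainder, Function.update s.lk t none, s.pred⟩
  /-- failed CAS: `Tail L ≠ some self`; proceed to the exit doorstep -/
  | casFail (s : St Thread Lock) (L : Lock)
      (h : s.pc t = .exitCAS) (hl : s.lk t = some L) (ht : s.Tail L ≠ some t) :
      Step t s ⟨s.Tail, s.Grant, Function.update s.pc t .exitDoor, s.lk, s.pred⟩
  /-- the exit doorstep: write `Grant self := some L` and start spinning on `Grant self` -/
  | exitDoorstep (s : St Thread Lock) (L : Lock)
      (h : s.pc t = .exitDoor) (hl : s.lk t = some L) :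
      Step t s ⟨s.Tail, Function.update s.Grant t (some L),
        Function.update s.pc t .exitSpin, s.lk, s.pred⟩
  /-- exit-code busy-wait loop: read `Grant self`; it is not yet `none`, keep spinning -/
  | exitSpinWait (s : St Thread Lock) (h : s.pc t = .exitSpin) (hg : s.Grant t ≠ none) :
      Step t s s
  /-- exit-code busy-wait loop: read `Grant self = none`; complete the exit code,
      returning to the remainder section -/
  | exitDone (s : St Thread Lock) (h : s.pc t = .exitSpin) (hg : s.Grant t = none) :
      Step t s ⟨s.Tail, s.Grant, Function.update s.pc t .remainder,
        Function.update s.lk t none, s.pred⟩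

/-- An execution of the Hemlock transition system: an infinite sequence of states starting
    from the initial state, where each step is one transition of the scheduled thread;
    every thread whose program counter is in the entry, exit or critical section eventually
    takes another step, and every thread leaves each critical section after finitely
    many steps. -/
structure Execution (Thread Lock : Type) [DecidableEq Thread] [DecidableEq Lock]
    [Fintype Thread] where
  states : ℕ → St Thread Lock
  sched : ℕ → Thread
  init : states 0 = initSt
  steps : ∀ n, Step (sched n) (states n) (states (n + 1))
  fair : ∀ n t, (states n).pc t ≠ PC.remainder → ∃ m, n ≤ m ∧ sched m = t
  critFinite : ∀ n t, (states n).pc t = PC.crit → ∃ m, n ≤ m ∧ (states m).pc t ≠ PC.crit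

variable [Fintype Thread]

/-- Thread `t` executes the entry doorstep (the SWAP) for lock `L` at time `n`. -/
def doorstepAt (E : Execution Thread Lock) (n : ℕ) (t : Thread) (L : Lock) : Prop :=
  E.sched n = t ∧ (E.states n).pc t = PC.remainder ∧
    (E.states (n + 1)).pc t ≠ PC.remainder ∧ (E.states (n + 1)).lk t = some L

/-- Thread `t` performs the CAS step of the exit code for lock `L` at time `n`
    (successful or not). -/
def casAt (E : Execution Thread Lock) (n : ℕ) (t : Thread) (L : Lock) : Prop :=
  E.sched n = t ∧ (E.states n).pc t = PC.exitCAS ∧ (E.states n).lk t = some L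

/-- Thread `t` performs the exit doorstep (the write `Grant t := some L`) at time `n`. -/
def exitDoorAt (E : Execution Thread Lock) (n : ℕ) (t : Thread) (L : Lock) : Prop :=
  E.sched n = t ∧ (E.states n).pc t = PC.exitDoor ∧ (E.states n).lk t = some L

/-- Thread `t` is in the critical section protected by `L` in state `s`. -/
def inCS (s : St Thread Lock) (t : Thread) (L : Lock) : Prop :=
  s.pc t = PC.crit ∧ s.lk t = some L

/-- Thread `t` is in the entry code for lock `L` in state `s`. -/
def inEntry (s : St Thread Lock) (t : Thread) (L : Lock) : Prop :=
  s.pc t = PC.entrySpin ∧ s.lk t = some L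

/-- Thread `t` enters the critical section protected by `L` at step `m`. -/
def entersCSAt (E : Execution Thread Lock) (m : ℕ) (t : Thread) (L : Lock) : Prop :=
  E.sched m = t ∧ (E.states m).pc t ≠ PC.crit ∧
    (E.states (m + 1)).pc t = PC.crit ∧ (E.states (m + 1)).lk t = some L

/-- Thread `t` completes its critical section protected by `L` at step `k`
    (leaving the critical section and beginning the exit code). -/
def exitsCSAt (E : Execution Thread Lock) (k : ℕ) (t : Thread) (L : Lock) : Prop :=
  E.sched k = t ∧ (E.states k).pc t = PC.crit ∧ (E.states k).lk t = some L ∧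
    (E.states (k + 1)).pc t ≠ PC.crit

/-- Thread `t` completes the exit code for lock `L` at step `k`
    (returning to the remainder section). -/
def completesExitAt (E : Execution Thread Lock) (k : ℕ) (t : Thread) (L : Lock) : Prop :=
  E.sched k = t ∧ (E.states k).lk t = some L ∧
    (E.states k).pc t ≠ PC.remainder ∧ (E.states (k + 1)).pc t = PC.remainder

/-- `m` is the first time at or after `n` at which thread `t` enters the
    critical section protected by `L`. -/
def firstEntryAfter (E : Execution Thread Lock) (n m : ℕ) (t : Thread) (L : Lock) : Prop :=
  n ≤ m ∧ entersCSAt E m t L ∧ ∀ k, n ≤ k → k < m → ¬ entersCSAt E k t L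

/-- At time `n`, thread `T` is spinning in the entry code waiting for `Grant w`
    to become `some L`: its next step reads `Grant w` inside the entry-code
    busy-wait loop with current lock `L` and `pred = some w`. -/
def spinningEntryFor (E : Execution Thread Lock) (n : ℕ) (T w : Thread) (L : Lock) : Prop :=
  (E.states n).pc T = PC.entrySpin ∧ (E.states n).pred T = some w ∧
    (E.states n).lk T = some L

/-- At time `n`, thread `T` is spinning on the word `Grant w`: its next step reads
    `Grant w` inside one of the two busy-wait loops (the entry-code loop with
    `pred = some w`, or the exit-code loop executed by `w` itself). -/
def spinningOn (E : Execution Thread Lock) (n : ℕ) (T w : Thread) : Prop :=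
  ((E.states n).pc T = PC.entrySpin ∧ (E.states n).pred T = some w) ∨
    (T = w ∧ (E.states n).pc T = PC.exitSpin)

/-- Lock `L` is associated with thread `T` at time `n`: `T` has executed the entry
    doorstep for `L` and has not yet completed the exit code for `L`. -/
def associated (E : Execution Thread Lock) (n : ℕ) (T : Thread) (L : Lock) : Prop :=
  ∃ m, m < n ∧ doorstepAt E m T L ∧ ∀ k, m < k → k < n → ¬ completesExitAt E k T L

/-- Only `p`'s own exit doorstep writes `some _` into `Grant p`, and `p` then spins until its
successor clears the field; so a set `Grant p` pins `p` in its exit spin. -/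
def GrantImpliesExitSpin (s : St Thread Lock) : Prop :=
  ∀ p, s.Grant p ≠ none → s.pc p = PC.exitSpin

omit [Fintype Thread] in
theorem Step.grantImpliesExitSpin {t : Thread} {s s' : St Thread Lock} (hst : Step t s s')
    (hs : GrantImpliesExitSpin s) : GrantImpliesExitSpin s' := by
  intro p hp
  have hsp := hs p
  cases hst <;> by_cases hpt : p = t <;> simp_all [Function.update]

omit [Fintype Thread] in
theorem Step.grant_eq_some {t p : Thread} {L : Lock} {s s' : St Thread Lock}
    (hst : Step t s s') (h : s'.Grant p = some L) :
    s.Grant p = some L ∨ (t = p ∧ s.pc p = PC.exitDoor ∧ s.lk p = some L) := by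
  cases hst <;> by_cases hpt : p = t <;> simp_all [Function.update]

omit [Fintype Thread] in
theorem Step.pc_ne_crit_of_exitSpin {t p : Thread} {s s' : St Thread Lock}
    (hst : Step t s s') (hp : s.pc p = PC.exitSpin) : s'.pc p ≠ PC.crit := by
  cases hst <;> by_cases hpt : p = t <;> simp_all [Function.update]

theorem Execution.grantImpliesExitSpin (E : Execution Thread Lock) (n : ℕ) :
    GrantImpliesExitSpin (E.states n) := by
  induction n with
  | zero => simp [GrantImpliesExitSpin, E.init, initSt]
  | succ n ih => exact (E.steps n).grantImpliesExitSpin ih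

theorem Execution.exists_exitDoorAt_of_grant_eq_some (E : Execution Thread Lock) {p : Thread}
    {L : Lock} {n : ℕ} (h : (E.states n).Grant p = some L) : ∃ k < n, exitDoorAt E k p L := by
  induction n with
  | zero => simp [E.init, initSt] at h
  | succ n ih =>
    rcases (E.steps n).grant_eq_some h with hprev | ⟨hsched, hdoor, hlk⟩
    · obtain ⟨k, hk, hexit⟩ := ih hprev
      exact ⟨k, by omega, hexit⟩
    · exact ⟨n, n.lt_succ_self, hsched, hdoor, hlk⟩

theorem predecessor_outside_cs_general {Thread Lock : Type} [DecidableEq Thread]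
    [DecidableEq Lock] [Fintype Thread] (E : Execution Thread Lock) (L : Lock)
    (P : Thread) (m : ℕ)
    (hobs : (E.states m).Grant P = some L) :
    ¬ inCS (E.states (m + 1)) P L ∧ ∃ k, k < m ∧ exitDoorAt E k P L := by
  have hspin : (E.states m).pc P = PC.exitSpin :=
    E.grantImpliesExitSpin m P (by simp [hobs])
  exact ⟨fun hcs => (E.steps m).pc_ne_crit_of_exitSpin hspin hcs.1,
    E.exists_exitDoorAt_of_grant_eq_some hobs⟩

/-- If thread `Ti`, spinning in the entry code for `L` on its predecessor `P`'s Grant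
field, observes `Grant P = some L` at step `m` and thereupon writes `Grant P := none`
and enters the critical section protected by `L`, then at the moment `Ti` enters the
critical section, `P` is outside the critical section protected by `L`, and `P` has
already performed the exit doorstep for `L`. -/
theorem predecessor_outside_cs {Thread Lock : Type} [DecidableEq Thread]
    [DecidableEq Lock] [Fintype Thread] (E : Execution Thread Lock) (L : Lock)
    (Ti P : Thread) (m : ℕ)
    (hsched : E.sched m = Ti)
    (hpc : (E.states m).pc Ti = PC.entrySpin)
    (hpred : (E.states m).pred Ti = some P)
    (hlk : (E.states m).lk Ti = some L)
    (hobs : (E.states m).Grant P = some L) :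
    ¬ inCS (E.states (m + 1)) P L ∧ ∃ k, k < m ∧ exitDoorAt E k P L :=
  predecessor_outside_cs_general E L P m hobs

end Hemlock
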